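/- In a metric graph G' with weights that are powers of 1/2 and at least one vertex of weight 1, if W_i is any walk visiting exactly the vertices of weight 1/2^i (each once), then l(W_i) ≤ 2^i · OPT_{G'} whenever W_i is a shortest Hamiltonian path on those vertices. -/

import Mathlib

open scoped ENNReal BigOperators

/-- Total edge length of the segment of the infinite walk `W` from index `a` to `b`. -/
noncomputable def walkLen {V : Type*} (l : V → V → ℝ≥0∞) (W : ℕ → V) (a b : ℕ) : ℝ≥0∞ :=
  ∑ i ∈ Finset.Ico a b, l (W i) (W (i + 1))

/-- The walk visits every vertex infinitely often. -/
def VisitsInfOften {V : Type*} (W : ℕ → V) : Prop :=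
  ∀ v : V, ∀ N : ℕ, ∃ a : ℕ, N ≤ a ∧ W a = v

/-- Latency of vertex `v` on infinite walk `W`: the supremum, over visits to `v`,
of the length of the sub-walk until the next visit to `v`. -/
noncomputable def latency {V : Type*} (l : V → V → ℝ≥0∞) (W : ℕ → V) (v : V) : ℝ≥0∞ :=
  ⨆ (a : ℕ) (_ : W a = v), ⨅ (b : ℕ) (_ : a < b ∧ W b = v), walkLen l W a b

/-- Cost of an infinite walk: the maximum weighted latency over all vertices. -/
noncomputable def walkCost {V : Type*} (l : V → V → ℝ≥0∞) (φ : V → ℝ≥0∞) (W : ℕ → V) : ℝ≥0∞ :=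
  ⨆ v : V, φ v * latency l W v

/-- Optimal cost over all infinite walks (complete graph) visiting all vertices
infinitely often. -/
noncomputable def OPT {V : Type*} (l : V → V → ℝ≥0∞) (φ : V → ℝ≥0∞) : ℝ≥0∞ :=
  ⨅ (W : ℕ → V) (_ : VisitsInfOften W), walkCost l φ W

/-- Length of a finite walk given as a list of vertices, using the extended metric. -/
noncomputable def elistLen {V : Type*} [MetricSpace V] (L : List V) : ℝ≥0∞ :=
  ((L.zip L.tail).map (fun q => edist q.1 q.2)).sum

/-!
In an infinite walk `W`, pick a time `s` after which every vertex of `V_i` has already been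
visited, and let `t v` be the first visit to `v` at or after `s`. The segment `[s, t v]` lies
inside a gap between consecutive visits to `v`, so its length is at most the latency of `v`,
which is at most `2^i · cost(W)`. Listing `V_i` in the order of the times `t v` gives a
Hamiltonian path whose edges, by the triangle inequality, are shortcuts of the consecutive
segments of `W` between these times; its length is therefore at most that of `W` on
`[s, max t]`, hence at most `2^i · cost(W)`, and a shortest Hamiltonian path is no longer.
-/

section WalkLen

variable {V : Type*} (l : V → V → ℝ≥0∞) (W : ℕ → V) {a b c : ℕ}

lemma walkLen_mono_right (h : b ≤ c) : walkLen l W a b ≤ walkLen l W a c :=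
  Finset.sum_le_sum_of_subset (Finset.Ico_subset_Ico le_rfl h)

lemma walkLen_anti_left (h : a ≤ b) : walkLen l W b c ≤ walkLen l W a c :=
  Finset.sum_le_sum_of_subset (Finset.Ico_subset_Ico h le_rfl)

lemma walkLen_add (hab : a ≤ b) (hbc : b ≤ c) :
    walkLen l W a b + walkLen l W b c = walkLen l W a c :=
  Finset.sum_Ico_consecutive _ hab hbc

end WalkLen

section Metric

variable {V : Type*} [MetricSpace V]

@[simp]
lemma elistLen_nil : elistLen ([] : List V) = 0 := rfl

@[simp]
lemma elistLen_singleton (v : V) : elistLen [v] = 0 := by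
  simp [elistLen]

lemma elistLen_cons_cons (v w : V) (L : List V) :
    elistLen (v :: w :: L) = edist v w + elistLen (w :: L) := by
  simp [elistLen]

lemma edist_le_walkLen (W : ℕ → V) {a b : ℕ} (h : a ≤ b) :
    edist (W a) (W b) ≤ walkLen (fun u w => edist u w) W a b := by
  induction b, h using Nat.le_induction with
  | base => simp
  | succ b hab ih =>
    calc edist (W a) (W (b + 1)) ≤ edist (W a) (W b) + edist (W b) (W (b + 1)) :=
          edist_triangle _ _ _
      _ ≤ walkLen (fun u w => edist u w) W a b + edist (W b) (W (b + 1)) := by gcongr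
      _ = walkLen (fun u w => edist u w) W a (b + 1) := by
          rw [walkLen, walkLen, Finset.sum_Ico_succ_top hab]

lemma elistLen_le_walkLen_of_pairwise (W : ℕ → V) (t : V → ℕ) {b : ℕ} :
    ∀ {L : List V} {s : ℕ}, L.Pairwise (fun u w => t u ≤ t w) → (∀ v ∈ L, W (t v) = v) →
      (∀ v ∈ L, s ≤ t v) → (∀ v ∈ L, t v ≤ b) →
      elistLen L ≤ walkLen (fun u w => edist u w) W s b
  | [], _, _, _, _, _ => by simp
  | [_], _, _, _, _, _ => by simp
  | v :: w :: L, s, hsort, hW, hs, hb => by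
    have hvw : t v ≤ t w := List.rel_of_pairwise_cons hsort (by simp)
    have hwb : t w ≤ b := hb w (by simp)
    have hsw : s ≤ t w := (hs v (by simp)).trans hvw
    have hedge : edist v w ≤ walkLen (fun u w => edist u w) W s (t w) := by
      calc edist v w = edist (W (t v)) (W (t w)) := by rw [hW v (by simp), hW w (by simp)]
        _ ≤ walkLen (fun u w => edist u w) W (t v) (t w) := edist_le_walkLen W hvw
        _ ≤ walkLen (fun u w => edist u w) W s (t w) := walkLen_anti_left _ W (hs v (by simp))
    have htail : elistLen (w :: L) ≤ walkLen (fun u w => edist u w) W (t w) b := by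
      refine elistLen_le_walkLen_of_pairwise W t hsort.of_cons
        (fun u hu => hW u (List.mem_cons_of_mem _ hu)) ?_
        (fun u hu => hb u (List.mem_cons_of_mem _ hu))
      rintro u (_ | ⟨_, hu⟩)
      exacts [le_rfl, List.rel_of_pairwise_cons hsort.of_cons hu]
    calc elistLen (v :: w :: L) = edist v w + elistLen (w :: L) := elistLen_cons_cons v w L
      _ ≤ walkLen (fun u w => edist u w) W s (t w)
            + walkLen (fun u w => edist u w) W (t w) b := add_le_add hedge htail
      _ = walkLen (fun u w => edist u w) W s b := walkLen_add _ W hsw hwb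

end Metric

section NextVisit

variable {V : Type*} {W : ℕ → V}

open Classical in
noncomputable def nextVisit (hW : VisitsInfOften W) (s : ℕ) (v : V) : ℕ :=
  Nat.find (hW v s)

lemma le_nextVisit (hW : VisitsInfOften W) (s : ℕ) (v : V) : s ≤ nextVisit hW s v := by
  classical
  exact (Nat.find_spec (hW v s)).1

lemma apply_nextVisit (hW : VisitsInfOften W) (s : ℕ) (v : V) : W (nextVisit hW s v) = v := by
  classical
  exact (Nat.find_spec (hW v s)).2

lemma nextVisit_le (hW : VisitsInfOften W) {s b : ℕ} {v : V} (hsb : s ≤ b) (hb : W b = v) :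
    nextVisit hW s v ≤ b := by
  classical
  exact Nat.find_min' (hW v s) ⟨hsb, hb⟩

/-- If `v` was visited by time `s`, then `[s, nextVisit s v]` lies inside the gap from the
last visit at or before `s` to the following one. -/
lemma walkLen_nextVisit_le_latency (l : V → V → ℝ≥0∞) (hW : VisitsInfOften W) {s : ℕ} {v : V}
    (hvisited : ∃ a ≤ s, W a = v) : walkLen l W s (nextVisit hW s v) ≤ latency l W v := by
  classical
  obtain ⟨a₀, ha₀s, ha₀⟩ := hvisited
  set a := Nat.findGreatest (fun a => W a = v) s
  have ha : W a = v := Nat.findGreatest_spec (P := fun a => W a = v) ha₀s ha₀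
  have has : a ≤ s := Nat.findGreatest_le s
  have hgap : walkLen l W a (nextVisit hW s v) ≤
      ⨅ (c : ℕ) (_ : a < c ∧ W c = v), walkLen l W a c := by
    refine le_iInf₂ fun c ⟨hac, hc⟩ => walkLen_mono_right l W (nextVisit_le hW ?_ hc)
    by_contra! hcs
    exact Nat.findGreatest_is_greatest hac hcs.le hc
  calc walkLen l W s (nextVisit hW s v) ≤ walkLen l W a (nextVisit hW s v) :=
        walkLen_anti_left l W has
    _ ≤ ⨅ (c : ℕ) (_ : a < c ∧ W c = v), walkLen l W a c := hgap
    _ ≤ latency l W v :=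
        le_iSup₂ (f := fun (a : ℕ) (_ : W a = v) =>
          ⨅ (c : ℕ) (_ : a < c ∧ W c = v), walkLen l W a c) a ha

end NextVisit

lemma exists_perm_elistLen_le_iSup_latency {V : Type*} [MetricSpace V] {W : ℕ → V}
    (hW : VisitsInfOften W) (L : List V) :
    ∃ L' : List V, L'.Perm L ∧
      elistLen L' ≤ ⨆ v ∈ L, latency (fun a b => edist a b) W v := by
  classical
  rcases eq_or_ne L [] with rfl | hL
  · exact ⟨[], List.Perm.refl _, by simp⟩
  obtain ⟨v₀, hv₀⟩ := L.exists_mem_of_ne_nil hL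
  set s := L.toFinset.sup (nextVisit hW 0)
  set t := nextVisit hW s
  obtain ⟨w, hw, hwmax⟩ := L.toFinset.exists_mem_eq_sup ⟨v₀, by simpa using hv₀⟩ t
  rw [List.mem_toFinset] at hw
  set L' := L.mergeSort (fun u w => decide (t u ≤ t w))
  have hperm : L'.Perm L := List.mergeSort_perm L _
  have hsorted : L'.Pairwise (fun u w => t u ≤ t w) := by
    simpa using List.pairwise_mergeSort (le := fun u w => decide (t u ≤ t w))
      (fun _ _ _ h₁ h₂ => by simp only [decide_eq_true_eq] at *; exact h₁.trans h₂)
      (fun _ _ => by simpa using Nat.le_total _ _) L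
  have hvisited : ∀ v ∈ L, ∃ a ≤ s, W a = v := fun v hv =>
    ⟨nextVisit hW 0 v, Finset.le_sup (List.mem_toFinset.mpr hv), apply_nextVisit hW 0 v⟩
  refine ⟨L', hperm, ?_⟩
  calc elistLen L' ≤ walkLen (fun a b => edist a b) W s (t w) := by
        refine elistLen_le_walkLen_of_pairwise W t hsorted (fun v _ => apply_nextVisit hW s v)
          (fun v _ => le_nextVisit hW s v) fun v hv => ?_
        rw [← hwmax]
        exact Finset.le_sup (List.mem_toFinset.mpr (hperm.mem_iff.mp hv))
    _ ≤ latency (fun a b => edist a b) W w := walkLen_nextVisit_le_latency _ hW (hvisited w hw)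
    _ ≤ ⨆ v ∈ L, latency (fun a b => edist a b) W v :=
        le_iSup₂ (f := fun v (_ : v ∈ L) => latency (fun a b => edist a b) W v) w hw

lemma latency_le_inv_mul_walkCost {V : Type*} (l : V → V → ℝ≥0∞) (φ : V → ℝ≥0∞) (W : ℕ → V)
    {v : V} (h₀ : φ v ≠ 0) (hfin : φ v ≠ ∞) : latency l W v ≤ (φ v)⁻¹ * walkCost l φ W :=
  (ENNReal.mul_le_iff_le_inv h₀ hfin).mp (le_iSup (fun u => φ u * latency l W u) v)

theorem tsp_path_length_bound_general {V : Type*} [MetricSpace V]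
    (φ : V → ℝ≥0∞) (i : ℕ) (L : List V) (hnd : L.Nodup)
    (hmem : ∀ v : V, v ∈ L ↔ φ v = (1/2 : ℝ≥0∞) ^ i)
    (hshort : ∀ L' : List V, L'.Nodup → (∀ v : V, v ∈ L' ↔ φ v = (1/2 : ℝ≥0∞) ^ i) →
      elistLen L ≤ elistLen L') :
    elistLen L ≤ 2 ^ i * OPT (fun a b => edist a b) φ := by
  have hlatency : ∀ W, ∀ v ∈ L,
      latency (fun a b => edist a b) W v ≤ 2 ^ i * walkCost (fun a b => edist a b) φ W := by
    intro W v hv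
    have hφ := (hmem v).mp hv
    simpa [hφ, ENNReal.inv_pow] using
      latency_le_inv_mul_walkCost _ φ W (v := v) (by simp [hφ]) (by simp [hφ])
  rw [OPT, ENNReal.mul_iInf_of_ne (by simp) (by simp)]
  refine le_iInf fun W => ?_
  rw [ENNReal.mul_iInf_of_ne (by simp) (by simp)]
  refine le_iInf fun hW => ?_
  obtain ⟨L', hperm, hL'⟩ := exists_perm_elistLen_le_iSup_latency hW L
  calc elistLen L ≤ elistLen L' :=
        hshort L' (hperm.nodup_iff.mpr hnd) fun v => hperm.mem_iff.trans (hmem v)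
    _ ≤ ⨆ v ∈ L, latency (fun a b => edist a b) W v := hL'
    _ ≤ 2 ^ i * walkCost (fun a b => edist a b) φ W := iSup₂_le (hlatency W)

/-- In a relaxed metric graph with a weight-1 vertex, a shortest Hamiltonian path on
the vertices of weight 1/2^i has length at most 2^i·OPT. -/
theorem tsp_path_length_bound {V : Type*} [MetricSpace V] [Fintype V]
    (φ : V → ℝ≥0∞) (hpow : ∀ u : V, ∃ x : ℕ, φ u = (1/2 : ℝ≥0∞) ^ x)
    (hone : ∃ u : V, φ u = 1) (i : ℕ) (L : List V) (hnd : L.Nodup)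
    (hmem : ∀ v : V, v ∈ L ↔ φ v = (1/2 : ℝ≥0∞) ^ i)
    (hshort : ∀ L' : List V, L'.Nodup → (∀ v : V, v ∈ L' ↔ φ v = (1/2 : ℝ≥0∞) ^ i) →
      elistLen L ≤ elistLen L') :
    elistLen L ≤ 2 ^ i * OPT (fun a b => edist a b) φ :=
  tsp_path_length_bound_general φ i L hnd hmem hshort
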